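/- Let n be a positive integer. For all vectors X, Y, Z, W ∈ ℝⁿ, the trace over Λ*(ℝⁿ) satisfies tr[c̄(X)∘c̄(Y)∘c(Z)∘c(W)] = −⟨X,Y⟩·⟨Z,W⟩ · 2ⁿ. -/

import Mathlib

noncomputable section

open scoped RealInnerProductSpace

/-- Exterior multiplication `ε(v*)` on `Λ*(ℝⁿ)`: left wedge multiplication by `v`. -/
def extMul {n : ℕ} (v : EuclideanSpace ℝ (Fin n)) :
    ExteriorAlgebra ℝ (EuclideanSpace ℝ (Fin n)) →ₗ[ℝ]
      ExteriorAlgebra ℝ (EuclideanSpace ℝ (Fin n)) :=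
  LinearMap.mulLeft ℝ (ExteriorAlgebra.ι ℝ v)

/-- Interior multiplication `ι(v*)` on `Λ*(ℝⁿ)`: contraction with the covector
`⟨v, ·⟩` dual to `v` via the standard inner product. -/
def intMul {n : ℕ} (v : EuclideanSpace ℝ (Fin n)) :
    ExteriorAlgebra ℝ (EuclideanSpace ℝ (Fin n)) →ₗ[ℝ]
      ExteriorAlgebra ℝ (EuclideanSpace ℝ (Fin n)) :=
  CliffordAlgebra.contractLeft (Q := (0 : QuadraticForm ℝ (EuclideanSpace ℝ (Fin n))))
    ((innerSL ℝ v).toLinearMap)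

/-- The Clifford action `c(v) = ε(v*) − ι(v*)`. -/
def cOp {n : ℕ} (v : EuclideanSpace ℝ (Fin n)) :
    ExteriorAlgebra ℝ (EuclideanSpace ℝ (Fin n)) →ₗ[ℝ]
      ExteriorAlgebra ℝ (EuclideanSpace ℝ (Fin n)) :=
  extMul v - intMul v

/-- The Clifford action `c̄(v) = ε(v*) + ι(v*)`. -/
def cBarOp {n : ℕ} (v : EuclideanSpace ℝ (Fin n)) :
    ExteriorAlgebra ℝ (EuclideanSpace ℝ (Fin n)) →ₗ[ℝ]
      ExteriorAlgebra ℝ (EuclideanSpace ℝ (Fin n)) :=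
  extMul v + intMul v

/-! ### Auxiliary material: a basis of the exterior algebra of `ℝⁿ`, of size `2 ^ n`. -/

namespace TraceCbarAux

open CliffordAlgebra

/-- `ℝⁿ⁺¹ ≃ ℝⁿ × ℝ` as modules. -/
def euclSucc (n : ℕ) : EuclideanSpace ℝ (Fin (n+1)) ≃ₗ[ℝ] (EuclideanSpace ℝ (Fin n)) × ℝ :=
  (WithLp.linearEquiv 2 ℝ (Fin (n+1) → ℝ)) ≪≫ₗ
  (LinearEquiv.funCongrLeft ℝ ℝ finSumFinEquiv) ≪≫ₗ
  (LinearEquiv.sumArrowLequivProdArrow (Fin n) (Fin 1) ℝ ℝ) ≪≫ₗ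
  (LinearEquiv.prodCongr ((WithLp.linearEquiv 2 ℝ (Fin n → ℝ)).symm)
    (LinearEquiv.funUnique (Fin 1) ℝ ℝ))

/-- Any linear equivalence is an isometry onto a vanishing quadratic form. -/
def zeroIso {M N : Type*} [AddCommGroup M] [AddCommGroup N] [Module ℝ M] [Module ℝ N]
    (e : M ≃ₗ[ℝ] N) (Q : QuadraticForm ℝ N) (hQ : ∀ x, Q x = 0) :
    QuadraticMap.IsometryEquiv (0 : QuadraticForm ℝ M) Q :=
  { e with map_app' := fun m => by simp [hQ] }

/-- `Λ*(ℝⁿ⁺¹) ≃ Λ*(ℝⁿ) ⊗ Λ*(ℝ)` as modules. -/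
def stepEquiv (n : ℕ) :
    ExteriorAlgebra ℝ (EuclideanSpace ℝ (Fin (n+1))) ≃ₗ[ℝ]
      TensorProduct ℝ (ExteriorAlgebra ℝ (EuclideanSpace ℝ (Fin n))) (ExteriorAlgebra ℝ ℝ) :=
  (CliffordAlgebra.equivOfIsometry (zeroIso (euclSucc n)
      ((0 : QuadraticForm ℝ (EuclideanSpace ℝ (Fin n))).prod (0 : QuadraticForm ℝ ℝ))
      (by intro x; simp))).toLinearEquiv ≪≫ₗ
  (CliffordAlgebra.prodEquiv 0 0).toLinearEquiv ≪≫ₗ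
  (GradedTensorProduct.of ℝ (evenOdd (0 : QuadraticForm ℝ (EuclideanSpace ℝ (Fin n))))
    (evenOdd (0 : QuadraticForm ℝ ℝ))).symm

/-- A basis of `Λ*(ℝ)` of size two, via the dual numbers. -/
def basisDual : Module.Basis (Fin 2) ℝ (ExteriorAlgebra ℝ ℝ) :=
  (Module.Basis.finTwoProd ℝ).map
    ((CliffordAlgebraDualNumber.equiv (R := ℝ)).toLinearEquiv ≪≫ₗ
      (LinearEquiv.refl ℝ (ℝ × ℝ) : TrivSqZeroExt ℝ ℝ ≃ₗ[ℝ] ℝ × ℝ)).symm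

/-- A basis of `Λ*(ℝ⁰)` of size one. -/
def basisZero : Module.Basis (Fin 1) ℝ (ExteriorAlgebra ℝ (EuclideanSpace ℝ (Fin 0))) :=
  (Module.Basis.singleton (Fin 1) ℝ).map
    ((CliffordAlgebra.equivOfIsometry (zeroIso
        (LinearEquiv.ofSubsingleton (EuclideanSpace ℝ (Fin 0)) PUnit.{1})
        (0 : QuadraticForm ℝ PUnit.{1}) (fun _ => rfl))).toLinearEquiv ≪≫ₗ
      (CliffordAlgebraRing.equiv (R := ℝ)).toLinearEquiv).symm

/-- A basis of `Λ*(ℝⁿ)` of size `2 ^ n`. -/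
def exteriorBasis : (n : ℕ) → Module.Basis (Fin (2^n)) ℝ (ExteriorAlgebra ℝ (EuclideanSpace ℝ (Fin n)))
  | 0 => basisZero
  | (n+1) =>
    (((exteriorBasis n).tensorProduct basisDual).map (stepEquiv n).symm).reindex
      ((finProdFinEquiv).trans (finCongr (by rw [pow_succ])))

variable {n : ℕ} (v w : EuclideanSpace ℝ (Fin n))

lemma ext_ext : extMul v * extMul w + extMul w * extMul v = 0 := by
  have h : ExteriorAlgebra.ι ℝ v * ExteriorAlgebra.ι ℝ w
      + ExteriorAlgebra.ι ℝ w * ExteriorAlgebra.ι ℝ v = 0 := by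
    simpa using CliffordAlgebra.ι_mul_ι_add_swap
      (Q := (0 : QuadraticForm ℝ (EuclideanSpace ℝ (Fin n)))) v w
  refine LinearMap.ext fun x => ?_
  have h2 := congrArg (· * x) h
  simp only [add_mul, zero_mul, mul_assoc] at h2
  simpa [extMul] using h2

lemma int_int : intMul v * intMul w + intMul w * intMul v = 0 := by
  refine LinearMap.ext fun x => ?_
  have h := CliffordAlgebra.contractLeft_comm
    (Q := (0 : QuadraticForm ℝ (EuclideanSpace ℝ (Fin n))))
    ((innerSL ℝ v).toLinearMap) ((innerSL ℝ w).toLinearMap) x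
  simp only [intMul, LinearMap.add_apply, Module.End.mul_apply, LinearMap.zero_apply, h]
  abel

lemma mix : intMul w * extMul v + extMul v * intMul w = ⟪w, v⟫ • 1 := by
  refine LinearMap.ext fun x => ?_
  have h := CliffordAlgebra.contractLeft_ι_mul
    (Q := (0 : QuadraticForm ℝ (EuclideanSpace ℝ (Fin n))))
    ((innerSL ℝ w).toLinearMap) v x
  simp only [intMul, extMul, LinearMap.add_apply, Module.End.mul_apply, LinearMap.mulLeft_apply, h,
    LinearMap.smul_apply, Module.End.one_apply, ContinuousLinearMap.coe_coe, innerSL_apply_apply]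
  abel

lemma c_c : cOp v * cOp w + cOp w * cOp v = (-(2 * ⟪v, w⟫)) • 1 := by
  have key : cOp v * cOp w + cOp w * cOp v =
      (extMul v * extMul w + extMul w * extMul v) + (intMul v * intMul w + intMul w * intMul v)
      - ((intMul w * extMul v + extMul v * intMul w)
        + (intMul v * extMul w + extMul w * intMul v)) := by
    simp only [cOp, sub_mul, mul_sub]; abel
  rw [key, ext_ext, int_int, mix, mix, real_inner_comm w v]
  module

lemma cbar_cbar : cBarOp v * cBarOp w + cBarOp w * cBarOp v = (2 * ⟪v, w⟫) • 1 := by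
  have key : cBarOp v * cBarOp w + cBarOp w * cBarOp v =
      (extMul v * extMul w + extMul w * extMul v) + (intMul v * intMul w + intMul w * intMul v)
      + ((intMul w * extMul v + extMul v * intMul w)
        + (intMul v * extMul w + extMul w * intMul v)) := by
    simp only [cBarOp]; noncomm_ring
  rw [key, ext_ext, int_int, mix, mix, real_inner_comm w v]
  module

lemma c_cbar : cOp v * cBarOp w + cBarOp w * cOp v = 0 := by
  have key : cOp v * cBarOp w + cBarOp w * cOp v =
      (extMul v * extMul w + extMul w * extMul v) - (intMul v * intMul w + intMul w * intMul v)
      + ((intMul w * extMul v + extMul v * intMul w)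
        - (intMul v * extMul w + extMul w * intMul v)) := by
    simp only [cOp, cBarOp, sub_mul, mul_sub, add_mul, mul_add]; abel
  rw [key, ext_ext, int_int, mix, mix, real_inner_comm w v]
  module

end TraceCbarAux

set_option maxHeartbeats 1000000 in
open TraceCbarAux in
theorem trace_cbar_cbar_c_c (n : ℕ) (hn : 0 < n)
    (X Y Z W : EuclideanSpace ℝ (Fin n)) :
    LinearMap.trace ℝ (ExteriorAlgebra ℝ (EuclideanSpace ℝ (Fin n)))
      (cBarOp X ∘ₗ cBarOp Y ∘ₗ cOp Z ∘ₗ cOp W) = -(⟪X, Y⟫ * ⟪Z, W⟫) * 2 ^ n := by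
  haveI : Module.Free ℝ (ExteriorAlgebra ℝ (EuclideanSpace ℝ (Fin n))) :=
    Module.Free.of_basis (exteriorBasis n)
  haveI : Module.Finite ℝ (ExteriorAlgebra ℝ (EuclideanSpace ℝ (Fin n))) :=
    Module.Finite.of_basis (exteriorBasis n)
  set T := LinearMap.trace ℝ (ExteriorAlgebra ℝ (EuclideanSpace ℝ (Fin n))) with hT
  have htr1 : T 1 = (2 : ℝ) ^ n := by
    rw [hT]
    rw [show (1 : Module.End ℝ (ExteriorAlgebra ℝ (EuclideanSpace ℝ (Fin n)))) =
      LinearMap.id from rfl, LinearMap.trace_id]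
    rw [Module.finrank_eq_card_basis (exteriorBasis n)]
    simp
  -- trace of c̄X c̄Y
  have hA : T (cBarOp X * cBarOp Y) = ⟪X, Y⟫ * 2 ^ n := by
    have h := congrArg T (cbar_cbar X Y)
    rw [map_add, LinearMap.trace_mul_comm ℝ (cBarOp Y) (cBarOp X), map_smul, smul_eq_mul,
      htr1] at h
    linarith [h]
  -- cW commutes with c̄X c̄Y
  have hwa : cOp W * cBarOp X = -(cBarOp X * cOp W) :=
    eq_neg_of_add_eq_zero_left (c_cbar W X)
  have hwb : cOp W * cBarOp Y = -(cBarOp Y * cOp W) :=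
    eq_neg_of_add_eq_zero_left (c_cbar W Y)
  have hcomm : cOp W * (cBarOp X * cBarOp Y) = (cBarOp X * cBarOp Y) * cOp W := by
    calc cOp W * (cBarOp X * cBarOp Y) = (cOp W * cBarOp X) * cBarOp Y := by rw [mul_assoc]
    _ = -(cBarOp X * (cOp W * cBarOp Y)) := by
        rw [hwa]; exact (neg_mul (cBarOp X * cOp W) (cBarOp Y)).trans (neg_inj.mpr (mul_assoc _ _ _))
    _ = cBarOp X * (cBarOp Y * cOp W) := by
        rw [hwb]; exact (neg_inj.mpr (mul_neg (cBarOp X) (cBarOp Y * cOp W))).trans (neg_neg _)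
    _ = (cBarOp X * cBarOp Y) * cOp W := by rw [mul_assoc]
  have hwz : cOp W * cOp Z = (-(2 * ⟪Z, W⟫)) • 1 - cOp Z * cOp W := by
    have := c_c Z W
    rw [eq_sub_iff_add_eq]
    linear_combination (norm := noncomm_ring) this
  -- the main cyclicity computation
  have hgoal : T (cBarOp X * cBarOp Y * cOp Z * cOp W) = -(⟪X, Y⟫ * ⟪Z, W⟫) * 2 ^ n := by
    have h1 : T (cBarOp X * cBarOp Y * cOp Z * cOp W)
        = T (cOp W * (cBarOp X * cBarOp Y * cOp Z)) :=
      LinearMap.trace_mul_comm ℝ _ _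
    have h2 : cOp W * (cBarOp X * cBarOp Y * cOp Z)
        = (cBarOp X * cBarOp Y) * ((-(2 * ⟪Z, W⟫)) • 1 - cOp Z * cOp W) := by
      calc cOp W * (cBarOp X * cBarOp Y * cOp Z)
          = (cOp W * (cBarOp X * cBarOp Y)) * cOp Z := by noncomm_ring
        _ = (cBarOp X * cBarOp Y) * (cOp W * cOp Z) := by rw [hcomm]; noncomm_ring
        _ = (cBarOp X * cBarOp Y) * ((-(2 * ⟪Z, W⟫)) • 1 - cOp Z * cOp W) := by rw [hwz]
    have h3 : (cBarOp X * cBarOp Y) * ((-(2 * ⟪Z, W⟫)) • 1 - cOp Z * cOp W)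
        = (-(2 * ⟪Z, W⟫)) • (cBarOp X * cBarOp Y) - cBarOp X * cBarOp Y * cOp Z * cOp W := by
      rw [mul_sub, mul_smul_comm, mul_one, mul_assoc, mul_assoc, mul_assoc]
    rw [h2, h3, map_sub, map_smul, smul_eq_mul, hA] at h1
    linarith [h1]
  have : cBarOp X ∘ₗ cBarOp Y ∘ₗ cOp Z ∘ₗ cOp W = cBarOp X * cBarOp Y * cOp Z * cOp W := by
    simp only [← Module.End.mul_eq_comp, mul_assoc]
  rw [this, hgoal]
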